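/- Under the recursive right-spinor representation Fₙ : Cl(n,n) → M_{2ⁿ}(K) defined by F₀ = id on K and Fₙ(A₀₀ + e_{n-1}A₀₁ + ẽ_{n-1}A₁₀ + ẽ_{n-1}e_{n-1}A₁₁) = [[F_{n-1}(A₀₀+A₁₁), F_{n-1}(α(A₀₁+A₁₀))], [F_{n-1}(A₀₁−A₁₀), F_{n-1}(α(A₀₀−A₁₁))]], the matrix Fₙ(e_k) is symmetric for every 0 ≤ k < n. -/
import Mathlib


/-- The quadratic form of signature `(n, n)` on `(Fin n → K) × (Fin n → K)`. -/
noncomputable def Qnn (K : Type*) [Field K] (n : ℕ) :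
    QuadraticForm K ((Fin n → K) × (Fin n → K)) :=
  (QuadraticMap.weightedSumSquares K (fun _ : Fin n => (1 : K))).prod
    (QuadraticMap.weightedSumSquares K (fun _ : Fin n => (-1 : K)))

/-- The generator `eₖ` of `Cl(n,n)` (squares to `1`). -/
noncomputable def eGen (K : Type*) [Field K] (n : ℕ) (k : Fin n) :
    CliffordAlgebra (Qnn K n) :=
  CliffordAlgebra.ι (Qnn K n) (Pi.single k 1, 0)

/-- The generator `ẽₖ` of `Cl(n,n)` (squares to `-1`). -/
noncomputable def fGen (K : Type*) [Field K] (n : ℕ) (k : Fin n) :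
    CliffordAlgebra (Qnn K n) :=
  CliffordAlgebra.ι (Qnn K n) (0, Pi.single k 1)

lemma snoc_single {K : Type*} [Field K] {m : ℕ} (k : Fin m) :
    (Fin.snoc (Pi.single k (1:K)) 0 : Fin (m+1) → K) = Pi.single k.castSucc 1 := by
  funext i
  induction i using Fin.lastCases with
  | last =>
    simp [Fin.snoc_last, Pi.single_eq_of_ne (Fin.castSucc_lt_last k).ne']
  | cast j =>
    rw [Fin.snoc_castSucc]
    rcases eq_or_ne j k with rfl | h
    · simp
    · rw [Pi.single_eq_of_ne h, Pi.single_eq_of_ne (by simpa using h)]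

theorem stmt11 {K : Type*} [Field K] (hK : (2 : K) ≠ 0)
    (incl : ∀ m : ℕ, CliffordAlgebra (Qnn K m) →ₐ[K] CliffordAlgebra (Qnn K (m + 1)))
    (hincl : ∀ (m : ℕ) (v : (Fin m → K) × (Fin m → K)),
      incl m (CliffordAlgebra.ι (Qnn K m) v) =
        CliffordAlgebra.ι (Qnn K (m + 1)) (Fin.snoc v.1 0, Fin.snoc v.2 0))
    (F : ∀ m : ℕ, CliffordAlgebra (Qnn K m) →ₐ[K] Matrix (Fin (2 ^ m)) (Fin (2 ^ m)) K)
    (hF0 : ∀ x : K, F 0 (algebraMap K _ x) = algebraMap K _ x)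
    (hrec : ∀ (m : ℕ) (A00 A01 A10 A11 : CliffordAlgebra (Qnn K m)),
      F (m + 1) (incl m A00
          + eGen K (m + 1) (Fin.last m) * incl m A01
          + fGen K (m + 1) (Fin.last m) * incl m A10
          + fGen K (m + 1) (Fin.last m) * eGen K (m + 1) (Fin.last m) * incl m A11) =
        (Matrix.reindex (finSumFinEquiv.trans (finCongr (by rw [pow_succ, mul_two])))
            (finSumFinEquiv.trans (finCongr (by rw [pow_succ, mul_two]))))
          (Matrix.fromBlocks
            (F m (A00 + A11)) (F m (CliffordAlgebra.involute (A01 + A10)))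
            (F m (A01 - A10)) (F m (CliffordAlgebra.involute (A00 - A11)))))
    (n : ℕ) (k : Fin n) :
    (F n (eGen K n k)).IsSymm := by
  induction n with
  | zero => exact k.elim0
  | succ m ih =>
    rcases Fin.eq_castSucc_or_eq_last k with ⟨k', rfl⟩ | rfl
    · have h1 : eGen K (m+1) k'.castSucc = incl m (eGen K m k') := by
        rw [eGen, eGen, hincl]
        congr 1
        refine Prod.ext (snoc_single k').symm ?_
        funext i
        induction i using Fin.lastCases <;> simp
      have h2 := hrec m (eGen K m k') 0 0 0
      simp only [map_zero, mul_zero, add_zero, zero_add, zero_sub, sub_zero, add_zero] at h2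
      rw [h1, h2, Matrix.reindex_apply]
      refine Matrix.IsSymm.submatrix ?_ _
      rw [Matrix.isSymm_fromBlocks_iff]
      refine ⟨ih k', by simp, by simp, ?_⟩
      rw [eGen, CliffordAlgebra.involute_ι, map_neg]
      exact (ih k').neg
    · have h2 := hrec m 0 1 0 0
      simp only [map_zero, map_one, mul_zero, mul_one, add_zero, zero_add, zero_sub, sub_zero,
        zero_add, map_one] at h2
      rw [h2, Matrix.reindex_apply]
      refine Matrix.IsSymm.submatrix ?_ _
      rw [Matrix.isSymm_fromBlocks_iff]
      refine ⟨by simp [Matrix.IsSymm], by simp, by simp, by simp [Matrix.IsSymm]⟩
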